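/- For all n ≥ 6, the graph B_n, obtained from K₄ minus an edge by attaching n − 4 pendant edges at a vertex of degree 3, satisfies N(B_n) = n + 2 + 2^{n−1}; in particular N(B_n) = N(R_n) + 1. -/
import Mathlib


open SimpleGraph

/-- Number of connected sets (nonempty vertex subsets inducing a connected subgraph). -/
noncomputable def numConnSets {V : Type*} [Fintype V] (G : SimpleGraph V) : ℕ :=
  Nat.card {s : Finset V // (G.induce (↑s : Set V)).Connected}

/-- Number of connected sets containing the vertex `v`. -/
noncomputable def numConnSetsAt {V : Type*} [Fintype V] (G : SimpleGraph V) (v : V) : ℕ :=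
  Nat.card {s : Finset V // v ∈ s ∧ (G.induce (↑s : Set V)).Connected}

/-- A graph is bicyclic if it is connected and has one more edge than vertices. -/
def Bicyclic {V : Type*} [Fintype V] (G : SimpleGraph V) : Prop :=
  G.Connected ∧ Nat.card G.edgeSet = Fintype.card V + 1

/-- The tadpole graph `D_m`: a triangle on vertices `0,1,2` with the path
`2,3,…,m-1` attached. -/
def tadpoleGraph (m : ℕ) : SimpleGraph (Fin m) :=
  SimpleGraph.fromRel (fun i j =>
    ((i : ℕ) = 0 ∧ (j : ℕ) = 1) ∨ ((i : ℕ) = 0 ∧ (j : ℕ) = 2) ∨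
    ((i : ℕ) = 1 ∧ (j : ℕ) = 2) ∨ (2 ≤ (i : ℕ) ∧ (j : ℕ) = (i : ℕ) + 1))

/-- The graph `L_n = G[3,3,n-4]`: triangles on `{0,1,2}` and `{n-3,n-2,n-1}`
joined by the path `2,3,…,n-3`. -/
def Lgraph (n : ℕ) : SimpleGraph (Fin n) :=
  SimpleGraph.fromRel (fun i j =>
    ((i : ℕ) = 0 ∧ (j : ℕ) = 1) ∨ ((i : ℕ) = 0 ∧ (j : ℕ) = 2) ∨
    ((i : ℕ) = 1 ∧ (j : ℕ) = 2) ∨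
    (2 ≤ (i : ℕ) ∧ (j : ℕ) = (i : ℕ) + 1 ∧ (j : ℕ) ≤ n - 3) ∨
    ((i : ℕ) = n - 3 ∧ (j : ℕ) = n - 2) ∨ ((i : ℕ) = n - 3 ∧ (j : ℕ) = n - 1) ∨
    ((i : ℕ) = n - 2 ∧ (j : ℕ) = n - 1))

/-- The graph `A_n`: `K₄` minus an edge on `{0,1,2,3}` (missing edge `0-3`,
so `3` has degree `2`) with the path `3,4,…,n-1` attached at `3`. -/
def Agraph (n : ℕ) : SimpleGraph (Fin n) :=
  SimpleGraph.fromRel (fun i j =>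
    ((i : ℕ) = 0 ∧ (j : ℕ) = 1) ∨ ((i : ℕ) = 0 ∧ (j : ℕ) = 2) ∨
    ((i : ℕ) = 1 ∧ (j : ℕ) = 2) ∨ ((i : ℕ) = 1 ∧ (j : ℕ) = 3) ∨
    ((i : ℕ) = 2 ∧ (j : ℕ) = 3) ∨ (3 ≤ (i : ℕ) ∧ (j : ℕ) = (i : ℕ) + 1))

/-- The graph `R_n`: vertex `0 = w` adjacent to all other vertices, with extra
edges `1-2` and `3-4` forming two triangles through `w`; the remaining `n-5`
neighbours of `w` are leaves. -/
def Rgraph (n : ℕ) : SimpleGraph (Fin n) :=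
  SimpleGraph.fromRel (fun i j =>
    ((i : ℕ) = 0 ∧ (j : ℕ) ≠ 0) ∨ ((i : ℕ) = 1 ∧ (j : ℕ) = 2) ∨
    ((i : ℕ) = 3 ∧ (j : ℕ) = 4))

/-- The graph `B_n`: `K₄` minus an edge on `{0,1,2,3}` (missing edge `0-3`,
so `1` has degree `3`) with `n-4` pendant edges `1-4, 1-5, …, 1-(n-1)`
attached at the degree-3 vertex `1`. -/
def Bgraph (n : ℕ) : SimpleGraph (Fin n) :=
  SimpleGraph.fromRel (fun i j =>
    ((i : ℕ) = 0 ∧ (j : ℕ) = 1) ∨ ((i : ℕ) = 0 ∧ (j : ℕ) = 2) ∨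
    ((i : ℕ) = 1 ∧ (j : ℕ) = 2) ∨ ((i : ℕ) = 1 ∧ (j : ℕ) = 3) ∨
    ((i : ℕ) = 2 ∧ (j : ℕ) = 3) ∨ ((i : ℕ) = 1 ∧ 4 ≤ (j : ℕ)))

section Aux
open SimpleGraph Finset

variable {V : Type*}

lemma hub_connected (G : SimpleGraph V) (s : Finset V) (a : V) (ha : a ∈ s)
    (h : ∀ b ∈ s, b ≠ a → G.Adj a b) : (G.induce (↑s : Set V)).Connected := by
  rw [SimpleGraph.connected_iff]
  refine ⟨fun u v => ?_, ⟨⟨a, ha⟩⟩⟩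
  have key : ∀ w : (↑s : Set V), (G.induce (↑s : Set V)).Reachable ⟨a, ha⟩ w := by
    rintro ⟨w, hw⟩
    rcases eq_or_ne w a with rfl | hne
    · rfl
    · exact SimpleGraph.Adj.reachable (by simpa using h w (by simpa using hw) hne)
  exact (key u).symm.trans (key v)

lemma closed_walk (G : SimpleGraph V) (s : Finset V) (C : Set V)
    (hC : ∀ x ∈ C, ∀ y, y ∈ s → G.Adj x y → y ∈ C)
    {u v : (↑s : Set V)} (w : (G.induce (↑s : Set V)).Walk u v) (hu : (u : V) ∈ C) :
    (v : V) ∈ C := by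
  induction w with
  | nil => exact hu
  | cons hadj p ih =>
    rename_i x y z
    exact ih (hC x hu y (by simpa using y.2) (by simpa using hadj))

lemma closed_subset (G : SimpleGraph V) (s : Finset V) (C : Set V)
    (hC : ∀ x ∈ C, ∀ y, y ∈ s → G.Adj x y → y ∈ C)
    (hconn : (G.induce (↑s : Set V)).Connected) (a : V) (ha : a ∈ s) (haC : a ∈ C) :
    ∀ v ∈ s, v ∈ C := by
  intro v hv
  obtain ⟨w⟩ := hconn ⟨a, ha⟩ ⟨v, hv⟩
  exact closed_walk G s C hC w haC

lemma isolated_eq [DecidableEq V] (G : SimpleGraph V) (s : Finset V)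
    (hconn : (G.induce (↑s : Set V)).Connected) (a : V) (ha : a ∈ s)
    (hiso : ∀ y, y ∈ s → ¬ G.Adj a y) : s = {a} := by
  have := closed_subset G s {a} (by rintro x rfl y hy hadj; exact absurd hadj (hiso y hy)) hconn a ha rfl
  apply Finset.eq_singleton_iff_unique_mem.2 ⟨ha, fun x hx => this x hx⟩

lemma conn_nonempty (G : SimpleGraph V) (s : Finset V)
    (hconn : (G.induce (↑s : Set V)).Connected) : s.Nonempty := by
  obtain ⟨⟨x, hx⟩⟩ := hconn.nonempty
  exact ⟨x, by simpa using hx⟩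

lemma singleton_conn [DecidableEq V] (G : SimpleGraph V) (a : V) :
    (G.induce (↑({a} : Finset V) : Set V)).Connected := by
  refine hub_connected G {a} a (Finset.mem_singleton_self a) ?_
  intro b hb hne
  exact absurd (Finset.mem_singleton.1 hb) hne

lemma pair_conn [DecidableEq V] (G : SimpleGraph V) {a b : V} (hab : G.Adj a b) :
    (G.induce (↑({a, b} : Finset V) : Set V)).Connected := by
  refine hub_connected G {a, b} a (Finset.mem_insert_self a _) ?_
  intro c hc hne
  rcases Finset.mem_insert.1 hc with rfl | hc
  · exact absurd rfl hne
  · rw [Finset.mem_singleton] at hc; subst hc; exact hab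

lemma card_filter_mem {V : Type*} [Fintype V] [DecidableEq V] (a : V) :
    (Finset.univ.filter (fun s : Finset V => a ∈ s)).card = 2 ^ (Fintype.card V - 1) := by
  have himg : (Finset.univ.filter (fun s : Finset V => a ∈ s)) =
      ((Finset.univ.erase a).powerset).image (insert a) := by
    ext s
    simp only [mem_filter, mem_univ, true_and, mem_image, mem_powerset]
    constructor
    · intro hs
      exact ⟨s.erase a, fun x hx => Finset.mem_erase.2 ⟨(Finset.mem_erase.1 hx).1, mem_univ _⟩,
        by simp [Finset.insert_erase hs]⟩
    · rintro ⟨t, ht, rfl⟩; exact Finset.mem_insert_self a t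
  rw [himg, Finset.card_image_of_injOn, Finset.card_powerset,
    Finset.card_erase_of_mem (mem_univ a), Finset.card_univ]
  intro t ht u hu he
  simp only [mem_coe, mem_powerset] at ht hu
  have hta : a ∉ t := fun h => (Finset.mem_erase.1 (ht h)).1 rfl
  have hua : a ∉ u := fun h => (Finset.mem_erase.1 (hu h)).1 rfl
  rw [← Finset.erase_insert hta, ← Finset.erase_insert hua, he]

lemma numConnSets_eq_card {V : Type*} [Fintype V] (G : SimpleGraph V)
    [DecidablePred (fun s : Finset V => (G.induce (↑s : Set V)).Connected)] : numConnSets G =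
    (Finset.univ.filter (fun s : Finset V => (G.induce (↑s : Set V)).Connected)).card := by
  classical
  rw [numConnSets, Nat.card_eq_fintype_card, Fintype.card_subtype]

lemma count_split {V : Type*} [Fintype V] [DecidableEq V] (G : SimpleGraph V) (a : V)
    (hhub : ∀ s : Finset V, a ∈ s → (G.induce (↑s : Set V)).Connected)
    (T : Finset (Finset V)) (hT : ∀ s ∈ T, a ∉ s)
    (hchar : ∀ s : Finset V, a ∉ s → ((G.induce (↑s : Set V)).Connected ↔ s ∈ T)) :
    numConnSets G = 2 ^ (Fintype.card V - 1) + T.card := by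
  classical
  rw [numConnSets_eq_card]
  rw [← Finset.card_filter_add_card_filter_not (fun s : Finset V => a ∈ s)]
  congr 1
  · rw [Finset.filter_filter, ← card_filter_mem a]
    congr 1
    ext s
    simp only [mem_filter, mem_univ, true_and]
    exact ⟨fun h => h.2, fun h => ⟨hhub s h, h⟩⟩
  · rw [Finset.filter_filter]
    congr 1
    ext s
    simp only [mem_filter, mem_univ, true_and]
    exact ⟨fun h => (hchar s h.2).1 h.1, fun h => ⟨(hchar s (hT s h)).2 h, hT s h⟩⟩

lemma card_filter_ge (n k : ℕ) :
    (Finset.univ.filter (fun j : Fin n => k ≤ (j : ℕ))).card = n - k := by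
  rw [← Finset.card_image_of_injective _ Fin.val_injective]
  have : (Finset.univ.filter (fun j : Fin n => k ≤ (j : ℕ))).image Fin.val = Finset.Ico k n := by
    ext m
    simp only [Finset.mem_image, Finset.mem_filter, Finset.mem_univ, true_and, Finset.mem_Ico]
    constructor
    · rintro ⟨j, hj, rfl⟩; exact ⟨hj, j.isLt⟩
    · rintro ⟨h4, hm⟩; exact ⟨⟨m, hm⟩, h4, rfl⟩
  rw [this, Nat.card_Ico]

end Aux

section Bpart
open SimpleGraph Finset

def Brel (a b : ℕ) : Prop :=
  (a = 0 ∧ b = 1) ∨ (a = 0 ∧ b = 2) ∨ (a = 1 ∧ b = 2) ∨ (a = 1 ∧ b = 3) ∨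
  (a = 2 ∧ b = 3) ∨ (a = 1 ∧ 4 ≤ b)

lemma Bgraph_adj {n : ℕ} {x y : Fin n} : (Bgraph n).Adj x y ↔
    (x : ℕ) ≠ (y : ℕ) ∧ (Brel x y ∨ Brel y x) := by
  simp only [Bgraph, SimpleGraph.fromRel_adj, ne_eq, Fin.ext_iff, Brel]

set_option maxHeartbeats 1000000 in
lemma Bcount (n : ℕ) (hn : 6 ≤ n) :
    numConnSets (Bgraph n) = 2 ^ (n - 1) + (n + 2) := by
  classical
  have h0 : (0:ℕ) < n := by omega
  have h1 : (1:ℕ) < n := by omega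
  have h2 : (2:ℕ) < n := by omega
  have h3 : (3:ℕ) < n := by omega
  have hhub : ∀ s : Finset (Fin n), (⟨1, h1⟩ : Fin n) ∈ s →
      ((Bgraph n).induce (↑s : Set (Fin n))).Connected := by
    intro s hs
    refine hub_connected _ s _ hs ?_
    intro b hb hne
    have hne' : (b : ℕ) ≠ 1 := fun h => hne (Fin.ext (by simp [h]))
    rw [Bgraph_adj]; simp only [Fin.val_mk]; unfold Brel; omega
  set T : Finset (Finset (Fin n)) :=
    ({{⟨0,h0⟩}, {⟨2,h2⟩}, {⟨3,h3⟩}, {⟨0,h0⟩,⟨2,h2⟩}, {⟨2,h2⟩,⟨3,h3⟩},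
      {⟨0,h0⟩,⟨2,h2⟩,⟨3,h3⟩}} : Finset (Finset (Fin n))) ∪
    (Finset.univ.filter (fun j : Fin n => 4 ≤ (j : ℕ))).image (fun j => {j}) with hTdef
  have hT : ∀ s ∈ T, (⟨1, h1⟩ : Fin n) ∉ s := by
    intro s hs
    rw [hTdef, Finset.mem_union] at hs
    rcases hs with hs | hs
    · simp only [Finset.mem_insert, Finset.mem_singleton] at hs
      rcases hs with rfl | rfl | rfl | rfl | rfl | rfl <;>
        simp [Finset.mem_insert, Fin.ext_iff]
    · obtain ⟨j, hj, rfl⟩ := Finset.mem_image.1 hs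
      have hj4 : 4 ≤ (j : ℕ) := (Finset.mem_filter.1 hj).2
      intro hmem
      have := Finset.mem_singleton.1 hmem
      rw [Fin.ext_iff] at this
      simp only [Fin.val_mk] at this
      omega
  have hchar : ∀ s : Finset (Fin n), (⟨1, h1⟩ : Fin n) ∉ s →
      (((Bgraph n).induce (↑s : Set (Fin n))).Connected ↔ s ∈ T) := by
    intro s hs1
    constructor
    · intro hconn
      by_cases hbig : ∃ j ∈ s, 4 ≤ (j : ℕ)
      · obtain ⟨j, hj, hj4⟩ := hbig
        have hiso : ∀ y, y ∈ s → ¬ (Bgraph n).Adj j y := by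
          intro y hy hadj
          rw [Bgraph_adj] at hadj
          unfold Brel at hadj
          have hy1 : (y : ℕ) = 1 := by omega
          have : y = (⟨1, h1⟩ : Fin n) := Fin.ext (by simp [hy1])
          exact hs1 (this ▸ hy)
        have hseq := isolated_eq (Bgraph n) s hconn j hj hiso
        rw [hTdef]
        refine Finset.mem_union_right _ (Finset.mem_image.2 ⟨j,
          Finset.mem_filter.2 ⟨Finset.mem_univ _, hj4⟩, hseq.symm⟩)
      · push_neg at hbig
        have hne1 : ∀ x ∈ s, (x : ℕ) ≠ 1 := by
          intro x hx h
          have : x = (⟨1, h1⟩ : Fin n) := Fin.ext (by simp [h])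
          exact hs1 (this ▸ hx)
        have hmem : ∀ x ∈ s, x = (⟨0,h0⟩ : Fin n) ∨ x = (⟨2,h2⟩ : Fin n) ∨
            x = (⟨3,h3⟩ : Fin n) := by
          intro x hx
          have hlt := hbig x hx
          have := hne1 x hx
          have hval : (x : ℕ) = 0 ∨ (x : ℕ) = 2 ∨ (x : ℕ) = 3 := by omega
          rcases hval with h | h | h
          · exact Or.inl (Fin.ext (by simp [h]))
          · exact Or.inr (Or.inl (Fin.ext (by simp [h])))
          · exact Or.inr (Or.inr (Fin.ext (by simp [h])))
        have hne03 : ¬((⟨0,h0⟩ : Fin n) ∈ s ∧ (⟨2,h2⟩ : Fin n) ∉ s ∧ (⟨3,h3⟩ : Fin n) ∈ s) := by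
          rintro ⟨hm0, hm2, hm3⟩
          have hiso0 : ∀ y, y ∈ s → ¬ (Bgraph n).Adj ⟨0,h0⟩ y := by
            intro y hy hadj
            rw [Bgraph_adj] at hadj
            simp only [Fin.val_mk] at hadj
            unfold Brel at hadj
            have : (y : ℕ) = 1 ∨ (y : ℕ) = 2 := by omega
            rcases this with h | h
            · exact hne1 y hy h
            · exact hm2 ((Fin.ext (by simp [h]) : y = (⟨2,h2⟩ : Fin n)) ▸ hy)
          have hsing := isolated_eq (Bgraph n) s hconn _ hm0 hiso0
          rw [hsing, Finset.mem_singleton, Fin.ext_iff] at hm3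
          simp at hm3
        rw [hTdef]
        refine Finset.mem_union_left _ ?_
        by_cases hm0 : (⟨0,h0⟩ : Fin n) ∈ s <;>
          by_cases hm2 : (⟨2,h2⟩ : Fin n) ∈ s <;>
          by_cases hm3 : (⟨3,h3⟩ : Fin n) ∈ s
        · have : s = {⟨0,h0⟩, ⟨2,h2⟩, ⟨3,h3⟩} := by
            apply Finset.Subset.antisymm
            · intro x hx
              rcases hmem x hx with rfl | rfl | rfl <;> simp
            · intro x hx
              simp only [Finset.mem_insert, Finset.mem_singleton] at hx
              rcases hx with rfl | rfl | rfl <;> assumption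
          rw [this]; simp
        · have : s = {⟨0,h0⟩, ⟨2,h2⟩} := by
            apply Finset.Subset.antisymm
            · intro x hx
              rcases hmem x hx with rfl | rfl | rfl
              · simp
              · simp
              · exact absurd hx hm3
            · intro x hx
              simp only [Finset.mem_insert, Finset.mem_singleton] at hx
              rcases hx with rfl | rfl <;> assumption
          rw [this]; simp
        · exact absurd ⟨hm0, hm2, hm3⟩ hne03
        · have : s = {⟨0,h0⟩} := by
            apply Finset.Subset.antisymm
            · intro x hx
              rcases hmem x hx with rfl | rfl | rfl
              · simp
              · exact absurd hx hm2
              · exact absurd hx hm3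
            · intro x hx
              rw [Finset.mem_singleton] at hx; subst hx; assumption
          rw [this]; simp
        · have : s = {⟨2,h2⟩, ⟨3,h3⟩} := by
            apply Finset.Subset.antisymm
            · intro x hx
              rcases hmem x hx with rfl | rfl | rfl
              · exact absurd hx hm0
              · simp
              · simp
            · intro x hx
              simp only [Finset.mem_insert, Finset.mem_singleton] at hx
              rcases hx with rfl | rfl <;> assumption
          rw [this]; simp
        · have : s = {⟨2,h2⟩} := by
            apply Finset.Subset.antisymm
            · intro x hx
              rcases hmem x hx with rfl | rfl | rfl
              · exact absurd hx hm0
              · simp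
              · exact absurd hx hm3
            · intro x hx
              rw [Finset.mem_singleton] at hx; subst hx; assumption
          rw [this]; simp
        · have : s = {⟨3,h3⟩} := by
            apply Finset.Subset.antisymm
            · intro x hx
              rcases hmem x hx with rfl | rfl | rfl
              · exact absurd hx hm0
              · exact absurd hx hm2
              · simp
            · intro x hx
              rw [Finset.mem_singleton] at hx; subst hx; assumption
          rw [this]; simp
        · exfalso
          obtain ⟨x, hx⟩ := conn_nonempty _ _ hconn
          rcases hmem x hx with rfl | rfl | rfl
          · exact hm0 hx
          · exact hm2 hx
          · exact hm3 hx
    · intro hsT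
      rw [hTdef, Finset.mem_union] at hsT
      rcases hsT with hs | hs
      · simp only [Finset.mem_insert, Finset.mem_singleton] at hs
        have hadj02 : (Bgraph n).Adj ⟨0,h0⟩ ⟨2,h2⟩ := by
          rw [Bgraph_adj]; simp only [Fin.val_mk]; unfold Brel; omega
        have hadj23 : (Bgraph n).Adj ⟨2,h2⟩ ⟨3,h3⟩ := by
          rw [Bgraph_adj]; simp only [Fin.val_mk]; unfold Brel; omega
        have hadj20 : (Bgraph n).Adj ⟨2,h2⟩ ⟨0,h0⟩ := hadj02.symm
        rcases hs with rfl | rfl | rfl | rfl | rfl | rfl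
        · exact singleton_conn _ _
        · exact singleton_conn _ _
        · exact singleton_conn _ _
        · exact pair_conn _ hadj02
        · exact pair_conn _ hadj23
        · refine hub_connected _ _ (⟨2,h2⟩ : Fin n) (by simp) ?_
          intro b hb hne
          simp only [Finset.mem_insert, Finset.mem_singleton] at hb
          rcases hb with rfl | rfl | rfl
          · exact hadj20
          · exact absurd rfl hne
          · exact hadj23
      · obtain ⟨j, hj, rfl⟩ := Finset.mem_image.1 hs
        exact singleton_conn _ _
  have hmain := count_split (Bgraph n) ⟨1, h1⟩ hhub T hT hchar
  have hcardT : T.card = n + 2 := ?_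
  · rw [hmain, Fintype.card_fin, hcardT]
  have hdisj : Disjoint
      ({{⟨0,h0⟩}, {⟨2,h2⟩}, {⟨3,h3⟩}, {⟨0,h0⟩,⟨2,h2⟩}, {⟨2,h2⟩,⟨3,h3⟩},
        {⟨0,h0⟩,⟨2,h2⟩,⟨3,h3⟩}} : Finset (Finset (Fin n)))
      ((Finset.univ.filter (fun j : Fin n => 4 ≤ (j : ℕ))).image (fun j => {j})) := by
    rw [Finset.disjoint_left]
    intro s hs6 himg
    obtain ⟨j, hjf, rfl⟩ := Finset.mem_image.1 himg
    have hj4 : 4 ≤ (j : ℕ) := (Finset.mem_filter.1 hjf).2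
    simp only [Finset.mem_insert, Finset.mem_singleton] at hs6
    have hsmall : ∃ x : Fin n, x ∈ ({j} : Finset (Fin n)) ∧ (x : ℕ) < 4 := by
      rcases hs6 with h | h | h | h | h | h
      · exact ⟨⟨0,h0⟩, by rw [h]; simp, by simp⟩
      · exact ⟨⟨2,h2⟩, by rw [h]; simp, by simp⟩
      · exact ⟨⟨3,h3⟩, by rw [h]; simp, by simp⟩
      · exact ⟨⟨0,h0⟩, by rw [h]; simp, by simp⟩
      · exact ⟨⟨2,h2⟩, by rw [h]; simp, by simp⟩
      · exact ⟨⟨0,h0⟩, by rw [h]; simp, by simp⟩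
    obtain ⟨x, hxj, hx4⟩ := hsmall
    rw [Finset.mem_singleton] at hxj
    subst hxj
    omega
  rw [hTdef, Finset.card_union_of_disjoint hdisj]
  have hc6 : ({{⟨0,h0⟩}, {⟨2,h2⟩}, {⟨3,h3⟩}, {⟨0,h0⟩,⟨2,h2⟩}, {⟨2,h2⟩,⟨3,h3⟩},
      {⟨0,h0⟩,⟨2,h2⟩,⟨3,h3⟩}} : Finset (Finset (Fin n))).card = 6 := by
    rw [← Finset.card_image_of_injective _ (Finset.image_injective Fin.val_injective)]
    have : (({{⟨0,h0⟩}, {⟨2,h2⟩}, {⟨3,h3⟩}, {⟨0,h0⟩,⟨2,h2⟩}, {⟨2,h2⟩,⟨3,h3⟩},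
        {⟨0,h0⟩,⟨2,h2⟩,⟨3,h3⟩}} : Finset (Finset (Fin n))).image
          (fun t => t.image Fin.val)) =
        ({{0}, {2}, {3}, {0,2}, {2,3}, {0,2,3}} : Finset (Finset ℕ)) := by
      simp [Finset.image_insert, Finset.image_singleton]
    rw [this]
    decide
  have hcimg : ((Finset.univ.filter (fun j : Fin n => 4 ≤ (j : ℕ))).image
      (fun j => ({j} : Finset (Fin n)))).card = n - 4 := by
    rw [Finset.card_image_of_injective _ Finset.singleton_injective, card_filter_ge]
  rw [hc6, hcimg]
  omega

end Bpart

section Rpart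
open SimpleGraph Finset

def Rrel (a b : ℕ) : Prop :=
  (a = 0 ∧ b ≠ 0) ∨ (a = 1 ∧ b = 2) ∨ (a = 3 ∧ b = 4)

lemma Rgraph_adj {n : ℕ} {x y : Fin n} : (Rgraph n).Adj x y ↔
    (x : ℕ) ≠ (y : ℕ) ∧ (Rrel x y ∨ Rrel y x) := by
  simp only [Rgraph, SimpleGraph.fromRel_adj, ne_eq, Fin.ext_iff, Rrel]

set_option maxHeartbeats 1000000 in
lemma Rcount (n : ℕ) (hn : 6 ≤ n) :
    numConnSets (Rgraph n) = 2 ^ (n - 1) + (n + 1) := by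
  classical
  have h0 : (0:ℕ) < n := by omega
  have h1 : (1:ℕ) < n := by omega
  have h2 : (2:ℕ) < n := by omega
  have h3 : (3:ℕ) < n := by omega
  have h4 : (4:ℕ) < n := by omega
  have hhub : ∀ s : Finset (Fin n), (⟨0, h0⟩ : Fin n) ∈ s →
      ((Rgraph n).induce (↑s : Set (Fin n))).Connected := by
    intro s hs
    refine hub_connected _ s _ hs ?_
    intro b hb hne
    have hne' : (b : ℕ) ≠ 0 := fun h => hne (Fin.ext (by simp [h]))
    rw [Rgraph_adj]; simp only [Fin.val_mk]; unfold Rrel; omega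
  set T : Finset (Finset (Fin n)) :=
    ({{⟨1,h1⟩}, {⟨2,h2⟩}, {⟨3,h3⟩}, {⟨4,h4⟩}, {⟨1,h1⟩,⟨2,h2⟩},
      {⟨3,h3⟩,⟨4,h4⟩}} : Finset (Finset (Fin n))) ∪
    (Finset.univ.filter (fun j : Fin n => 5 ≤ (j : ℕ))).image (fun j => {j}) with hTdef
  have hT : ∀ s ∈ T, (⟨0, h0⟩ : Fin n) ∉ s := by
    intro s hs
    rw [hTdef, Finset.mem_union] at hs
    rcases hs with hs | hs
    · simp only [Finset.mem_insert, Finset.mem_singleton] at hs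
      rcases hs with rfl | rfl | rfl | rfl | rfl | rfl <;>
        simp [Finset.mem_insert, Fin.ext_iff]
    · obtain ⟨j, hj, rfl⟩ := Finset.mem_image.1 hs
      have hj5 : 5 ≤ (j : ℕ) := (Finset.mem_filter.1 hj).2
      intro hmem
      have := Finset.mem_singleton.1 hmem
      rw [Fin.ext_iff] at this
      simp only [Fin.val_mk] at this
      omega
  have hchar : ∀ s : Finset (Fin n), (⟨0, h0⟩ : Fin n) ∉ s →
      (((Rgraph n).induce (↑s : Set (Fin n))).Connected ↔ s ∈ T) := by
    intro s hs0
    have hne0 : ∀ x ∈ s, (x : ℕ) ≠ 0 := by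
      intro x hx h
      exact hs0 ((Fin.ext (by simp [h]) : x = (⟨0,h0⟩ : Fin n)) ▸ hx)
    constructor
    · intro hconn
      by_cases hbig : ∃ j ∈ s, 5 ≤ (j : ℕ)
      · obtain ⟨j, hj, hj5⟩ := hbig
        have hiso : ∀ y, y ∈ s → ¬ (Rgraph n).Adj j y := by
          intro y hy hadj
          rw [Rgraph_adj] at hadj
          unfold Rrel at hadj
          have hy0 : (y : ℕ) = 0 := by omega
          exact hne0 y hy hy0
        have hseq := isolated_eq (Rgraph n) s hconn j hj hiso
        rw [hTdef]
        exact Finset.mem_union_right _ (Finset.mem_image.2 ⟨j,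
          Finset.mem_filter.2 ⟨Finset.mem_univ _, hj5⟩, hseq.symm⟩)
      · push_neg at hbig
        have hsplit : ∀ a ∈ s, ((a : ℕ) = 1 ∨ (a : ℕ) = 2) →
            ∀ b ∈ s, ¬((b : ℕ) = 3 ∨ (b : ℕ) = 4) := by
          intro a ha haval b hb hbval
          have hclosed := closed_subset (Rgraph n) s
            {x : Fin n | (x : ℕ) = 1 ∨ (x : ℕ) = 2} ?_ hconn a ha haval b hb
          · simp only [Set.mem_setOf_eq] at hclosed
            omega
          · intro x hx y hy hadj
            rw [Rgraph_adj] at hadj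
            unfold Rrel at hadj
            have := hne0 y hy
            simp only [Set.mem_setOf_eq] at hx ⊢
            omega
        rw [hTdef]
        refine Finset.mem_union_left _ ?_
        by_cases hA : (⟨1,h1⟩ : Fin n) ∈ s ∨ (⟨2,h2⟩ : Fin n) ∈ s
        · have hlow : ∃ a ∈ s, (a : ℕ) = 1 ∨ (a : ℕ) = 2 := by
            rcases hA with ha | ha
            · exact ⟨_, ha, Or.inl rfl⟩
            · exact ⟨_, ha, Or.inr rfl⟩
          obtain ⟨a, ha, haval⟩ := hlow
          have hm3 : (⟨3,h3⟩ : Fin n) ∉ s := fun h =>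
            hsplit a ha haval _ h (Or.inl rfl)
          have hm4 : (⟨4,h4⟩ : Fin n) ∉ s := fun h =>
            hsplit a ha haval _ h (Or.inr rfl)
          have hmem : ∀ x ∈ s, x = (⟨1,h1⟩ : Fin n) ∨ x = (⟨2,h2⟩ : Fin n) := by
            intro x hx
            have hlt := hbig x hx
            have hx0 := hne0 x hx
            have hval : (x : ℕ) = 1 ∨ (x : ℕ) = 2 ∨ (x : ℕ) = 3 ∨ (x : ℕ) = 4 := by omega
            rcases hval with h | h | h | h
            · exact Or.inl (Fin.ext (by simp [h]))
            · exact Or.inr (Fin.ext (by simp [h]))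
            · exact absurd hx ((Fin.ext (by simp [h]) : x = (⟨3,h3⟩ : Fin n)) ▸ hm3)
            · exact absurd hx ((Fin.ext (by simp [h]) : x = (⟨4,h4⟩ : Fin n)) ▸ hm4)
          by_cases hm1 : (⟨1,h1⟩ : Fin n) ∈ s <;> by_cases hm2 : (⟨2,h2⟩ : Fin n) ∈ s
          · have : s = {⟨1,h1⟩, ⟨2,h2⟩} := by
              apply Finset.Subset.antisymm
              · intro x hx
                rcases hmem x hx with rfl | rfl <;> simp
              · intro x hx
                simp only [Finset.mem_insert, Finset.mem_singleton] at hx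
                rcases hx with rfl | rfl <;> assumption
            rw [this]; simp
          · have : s = {⟨1,h1⟩} := by
              apply Finset.Subset.antisymm
              · intro x hx
                rcases hmem x hx with rfl | rfl
                · simp
                · exact absurd hx hm2
              · intro x hx
                rw [Finset.mem_singleton] at hx; subst hx; assumption
            rw [this]; simp
          · have : s = {⟨2,h2⟩} := by
              apply Finset.Subset.antisymm
              · intro x hx
                rcases hmem x hx with rfl | rfl
                · exact absurd hx hm1
                · simp
              · intro x hx
                rw [Finset.mem_singleton] at hx; subst hx; assumption
            rw [this]; simp
          · exact absurd hA (by simp [hm1, hm2])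
        · push_neg at hA
          obtain ⟨hm1, hm2⟩ := hA
          have hmem : ∀ x ∈ s, x = (⟨3,h3⟩ : Fin n) ∨ x = (⟨4,h4⟩ : Fin n) := by
            intro x hx
            have hlt := hbig x hx
            have hx0 := hne0 x hx
            have hval : (x : ℕ) = 1 ∨ (x : ℕ) = 2 ∨ (x : ℕ) = 3 ∨ (x : ℕ) = 4 := by omega
            rcases hval with h | h | h | h
            · exact absurd hx ((Fin.ext (by simp [h]) : x = (⟨1,h1⟩ : Fin n)) ▸ hm1)
            · exact absurd hx ((Fin.ext (by simp [h]) : x = (⟨2,h2⟩ : Fin n)) ▸ hm2)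
            · exact Or.inl (Fin.ext (by simp [h]))
            · exact Or.inr (Fin.ext (by simp [h]))
          by_cases hm3 : (⟨3,h3⟩ : Fin n) ∈ s <;> by_cases hm4 : (⟨4,h4⟩ : Fin n) ∈ s
          · have : s = {⟨3,h3⟩, ⟨4,h4⟩} := by
              apply Finset.Subset.antisymm
              · intro x hx
                rcases hmem x hx with rfl | rfl <;> simp
              · intro x hx
                simp only [Finset.mem_insert, Finset.mem_singleton] at hx
                rcases hx with rfl | rfl <;> assumption
            rw [this]; simp
          · have : s = {⟨3,h3⟩} := by
              apply Finset.Subset.antisymm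
              · intro x hx
                rcases hmem x hx with rfl | rfl
                · simp
                · exact absurd hx hm4
              · intro x hx
                rw [Finset.mem_singleton] at hx; subst hx; assumption
            rw [this]; simp
          · have : s = {⟨4,h4⟩} := by
              apply Finset.Subset.antisymm
              · intro x hx
                rcases hmem x hx with rfl | rfl
                · exact absurd hx hm3
                · simp
              · intro x hx
                rw [Finset.mem_singleton] at hx; subst hx; assumption
            rw [this]; simp
          · exfalso
            obtain ⟨x, hx⟩ := conn_nonempty _ _ hconn
            rcases hmem x hx with rfl | rfl
            · exact hm3 hx
            · exact hm4 hx
    · intro hsT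
      rw [hTdef, Finset.mem_union] at hsT
      rcases hsT with hs | hs
      · simp only [Finset.mem_insert, Finset.mem_singleton] at hs
        have hadj12 : (Rgraph n).Adj ⟨1,h1⟩ ⟨2,h2⟩ := by
          rw [Rgraph_adj]; simp only [Fin.val_mk]; unfold Rrel; omega
        have hadj34 : (Rgraph n).Adj ⟨3,h3⟩ ⟨4,h4⟩ := by
          rw [Rgraph_adj]; simp only [Fin.val_mk]; unfold Rrel; omega
        rcases hs with rfl | rfl | rfl | rfl | rfl | rfl
        · exact singleton_conn _ _
        · exact singleton_conn _ _
        · exact singleton_conn _ _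
        · exact singleton_conn _ _
        · exact pair_conn _ hadj12
        · exact pair_conn _ hadj34
      · obtain ⟨j, hj, rfl⟩ := Finset.mem_image.1 hs
        exact singleton_conn _ _
  have hmain := count_split (Rgraph n) ⟨0, h0⟩ hhub T hT hchar
  have hcardT : T.card = n + 1 := ?_
  · rw [hmain, Fintype.card_fin, hcardT]
  have hdisj : Disjoint
      ({{⟨1,h1⟩}, {⟨2,h2⟩}, {⟨3,h3⟩}, {⟨4,h4⟩}, {⟨1,h1⟩,⟨2,h2⟩},
        {⟨3,h3⟩,⟨4,h4⟩}} : Finset (Finset (Fin n)))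
      ((Finset.univ.filter (fun j : Fin n => 5 ≤ (j : ℕ))).image (fun j => {j})) := by
    rw [Finset.disjoint_left]
    intro s hs6 himg
    obtain ⟨j, hjf, rfl⟩ := Finset.mem_image.1 himg
    have hj5 : 5 ≤ (j : ℕ) := (Finset.mem_filter.1 hjf).2
    simp only [Finset.mem_insert, Finset.mem_singleton] at hs6
    have hsmall : ∃ x : Fin n, x ∈ ({j} : Finset (Fin n)) ∧ (x : ℕ) < 5 := by
      rcases hs6 with h | h | h | h | h | h
      · exact ⟨⟨1,h1⟩, by rw [h]; simp, by simp⟩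
      · exact ⟨⟨2,h2⟩, by rw [h]; simp, by simp⟩
      · exact ⟨⟨3,h3⟩, by rw [h]; simp, by simp⟩
      · exact ⟨⟨4,h4⟩, by rw [h]; simp, by simp⟩
      · exact ⟨⟨1,h1⟩, by rw [h]; simp, by simp⟩
      · exact ⟨⟨3,h3⟩, by rw [h]; simp, by simp⟩
    obtain ⟨x, hxj, hx5⟩ := hsmall
    rw [Finset.mem_singleton] at hxj
    subst hxj
    omega
  rw [hTdef, Finset.card_union_of_disjoint hdisj]
  have hc6 : ({{⟨1,h1⟩}, {⟨2,h2⟩}, {⟨3,h3⟩}, {⟨4,h4⟩}, {⟨1,h1⟩,⟨2,h2⟩},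
      {⟨3,h3⟩,⟨4,h4⟩}} : Finset (Finset (Fin n))).card = 6 := by
    rw [← Finset.card_image_of_injective _ (Finset.image_injective Fin.val_injective)]
    have : (({{⟨1,h1⟩}, {⟨2,h2⟩}, {⟨3,h3⟩}, {⟨4,h4⟩}, {⟨1,h1⟩,⟨2,h2⟩},
        {⟨3,h3⟩,⟨4,h4⟩}} : Finset (Finset (Fin n))).image
          (fun t => t.image Fin.val)) =
        ({{1}, {2}, {3}, {4}, {1,2}, {3,4}} : Finset (Finset ℕ)) := by
      simp [Finset.image_insert, Finset.image_singleton]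
    rw [this]
    decide
  have hcimg : ((Finset.univ.filter (fun j : Fin n => 5 ≤ (j : ℕ))).image
      (fun j => ({j} : Finset (Fin n)))).card = n - 5 := by
    rw [Finset.card_image_of_injective _ Finset.singleton_injective, card_filter_ge]
  rw [hc6, hcimg]
  omega

end Rpart

theorem numConnSets_Bgraph (n : ℕ) (hn : 6 ≤ n) :
    numConnSets (Bgraph n) = n + 2 + 2 ^ (n - 1) ∧
    numConnSets (Bgraph n) = numConnSets (Rgraph n) + 1 := by
  have hB := Bcount n hn
  have hR := Rcount n hn
  constructor
  · rw [hB]; ring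
  · rw [hB, hR]; ring
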